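/- arXiv:2502.17436 — 4 statements merged into one kernel-verified Lean document; each statement's English description precedes it below -/
import Mathlib

section
/- Assume ρ₀(x) = N(x; 0, 1) and ρ₁(x) = Σ_{k=1}^K w_k N(x; μ_k, σ_k²) with σ_k > 0, w_k ≥ 0 and Σ_k w_k = 1, with at least one w_k > 0. For every t ∈ [0,1], x ∈ ℝ and v ∈ ℝ, the velocity distribution satisfies π₁(v; x, t) = Σ_{k=1}^K w̃_{k,t}(x) · N(v; ((1−t)(μ_k − x) + t σ_k² x)/σ̃_{k,t}², σ_k²/σ̃_{k,t}²), where σ̃_{k,t}² = (1−t)² + t² σ_k² and w̃_{k,t}(x) = w_k N(x; t μ_k, σ̃_{k,t}²) / Σ_{k'=1}^K w_{k'} N(x; t μ_{k'}, σ̃_{k',t}²). -/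
/-!
For one Gaussian component, the joint density of `(X₀, X₁)` at `(x - t v, x + (1 - t) v)` is a
Gaussian in `(x, v)`; completing the square in `v` splits it into the marginal density
`N(x; t μ, σ̃²)` of `X_t` times a Gaussian density in `v`. Integrating over `v` therefore gives
`ρ_t(x) = Σ_k w_k N(x; t μ_k, σ̃_k²)`, and dividing the numerator, a sum of the same products,
by this mixture yields the posterior weights `w̃_k`.
-/

open MeasureTheory Real

/-- The Gaussian density `N(x; μ, σ²) = (2πσ²)^{−1/2} exp(−(x−μ)²/(2σ²))`,
parameterized by its mean `μ` and variance `σsq`. -/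
noncomputable def gauss (x μ σsq : ℝ) : ℝ :=
  (Real.sqrt (2 * Real.pi * σsq))⁻¹ * Real.exp (-(x - μ) ^ 2 / (2 * σsq))

open Finset

/-- The paper's `σ̃²_t`: the variance of `(1 - t) Z + t Y` for independent `Z ~ N(0, 1)` and
`Y ~ N(μ, s)`. -/
def interpVar (t s : ℝ) : ℝ := (1 - t) ^ 2 + t ^ 2 * s

noncomputable def velocityMean (t x μ s : ℝ) : ℝ := ((1 - t) * (μ - x) + t * s * x) / interpVar t s

lemma interpVar_pos (t : ℝ) {s : ℝ} (hs : 0 < s) : 0 < interpVar t s := by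
  rcases eq_or_ne t 0 with rfl | ht
  · norm_num [interpVar]
  · unfold interpVar; positivity

lemma gauss_eq_gaussianPDFReal (x μ : ℝ) {s : ℝ} (hs : 0 ≤ s) :
    gauss x μ s = ProbabilityTheory.gaussianPDFReal μ ⟨s, hs⟩ x := rfl

lemma integrable_gauss (μ : ℝ) {s : ℝ} (hs : 0 ≤ s) : Integrable (fun v ↦ gauss v μ s) := by
  simpa only [gauss_eq_gaussianPDFReal _ _ hs] using
    ProbabilityTheory.integrable_gaussianPDFReal μ ⟨s, hs⟩

lemma integral_gauss (μ : ℝ) {s : ℝ} (hs : 0 < s) : ∫ v, gauss v μ s = 1 := by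
  simpa only [gauss_eq_gaussianPDFReal _ _ hs.le] using
    ProbabilityTheory.integral_gaussianPDFReal_eq_one μ (v := ⟨s, hs.le⟩)
      (fun h ↦ hs.ne' (congrArg NNReal.toReal h))

lemma integral_sum_mul_gauss {ι : Type*} (I : Finset ι) (c m s : ι → ℝ)
    (hs : ∀ i ∈ I, 0 < s i) : ∫ v, ∑ i ∈ I, c i * gauss v (m i) (s i) = ∑ i ∈ I, c i := by
  rw [integral_finsetSum _ fun i hi ↦ (integrable_gauss _ (hs i hi).le).const_mul _]
  refine sum_congr rfl fun i hi ↦ ?_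
  rw [integral_const_mul, integral_gauss _ (hs i hi), mul_one]

lemma gauss_mul_gauss (t x v μ : ℝ) {s : ℝ} (hs : 0 < s) :
    gauss (x - t * v) 0 1 * gauss (x + (1 - t) * v) μ s =
      gauss x (t * μ) (interpVar t s) * gauss v (velocityMean t x μ s) (s / interpVar t s) := by
  have hS := interpVar_pos t hs
  have hnorm : (√(2 * π * 1))⁻¹ * (√(2 * π * s))⁻¹ =
      (√(2 * π * interpVar t s))⁻¹ * (√(2 * π * (s / interpVar t s)))⁻¹ := by
    rw [← mul_inv, ← mul_inv, ← sqrt_mul (by positivity), ← sqrt_mul (by positivity)]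
    congr 2
    field_simp
  -- completing the square in `v`
  have hexp : -(x - t * v - 0) ^ 2 / (2 * 1) + -(x + (1 - t) * v - μ) ^ 2 / (2 * s) =
      -(x - t * μ) ^ 2 / (2 * interpVar t s) +
        -(v - velocityMean t x μ s) ^ 2 / (2 * (s / interpVar t s)) := by
    unfold velocityMean
    field_simp
    unfold interpVar
    ring
  unfold gauss
  calc _ = ((√(2 * π * 1))⁻¹ * (√(2 * π * s))⁻¹) *
        exp (-(x - t * v - 0) ^ 2 / (2 * 1) + -(x + (1 - t) * v - μ) ^ 2 / (2 * s)) := by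
        rw [exp_add]; ring
    _ = _ := by rw [hnorm, hexp, exp_add]; ring

theorem velocity_distribution_gaussian_mixture_general
    (K : ℕ) (w μ σ : Fin K → ℝ)
    (hσ : ∀ k, 0 < σ k)
    (ρ₀ ρ₁ : ℝ → ℝ)
    (hρ₀ : ∀ x, ρ₀ x = gauss x 0 1)
    (hρ₁ : ∀ x, ρ₁ x = ∑ k, w k * gauss x (μ k) (σ k ^ 2))
    (ρt : ℝ → ℝ → ℝ)
    (hρt : ∀ t x, ρt t x = ∫ v : ℝ, ρ₀ (x - t * v) * ρ₁ (x + (1 - t) * v) ∂volume)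
    (t : ℝ) (x v : ℝ) :
    ρ₀ (x - t * v) * ρ₁ (x + (1 - t) * v) / ρt t x
      = ∑ k,
          (w k * gauss x (t * μ k) ((1 - t) ^ 2 + t ^ 2 * σ k ^ 2)
              / ∑ k', w k' * gauss x (t * μ k') ((1 - t) ^ 2 + t ^ 2 * σ k' ^ 2))
            * gauss v
                (((1 - t) * (μ k - x) + t * σ k ^ 2 * x) / ((1 - t) ^ 2 + t ^ 2 * σ k ^ 2))
                (σ k ^ 2 / ((1 - t) ^ 2 + t ^ 2 * σ k ^ 2)) := by
  have hσsq k : 0 < σ k ^ 2 := pow_pos (hσ k) 2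
  have hjoint v : ρ₀ (x - t * v) * ρ₁ (x + (1 - t) * v) =
      ∑ k, w k * gauss x (t * μ k) (interpVar t (σ k ^ 2)) *
        gauss v (velocityMean t x (μ k) (σ k ^ 2)) (σ k ^ 2 / interpVar t (σ k ^ 2)) := by
    rw [hρ₀, hρ₁, mul_sum]
    refine sum_congr rfl fun k _ ↦ ?_
    rw [mul_left_comm, gauss_mul_gauss t x v (μ k) (hσsq k), mul_assoc]
  have hmarginal : ρt t x = ∑ k, w k * gauss x (t * μ k) (interpVar t (σ k ^ 2)) := by
    simp only [hρt, hjoint]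
    exact integral_sum_mul_gauss _ _ _ _ fun k _ ↦ div_pos (hσsq k) (interpVar_pos t (hσsq k))
  rw [hjoint, hmarginal, sum_div]
  exact sum_congr rfl fun k _ ↦ by unfold velocityMean interpVar; ring

/-- Let `ρ₀(x) = N(x; 0, 1)` and
`ρ₁(x) = Σ_k w_k N(x; μ_k, σ_k²)` with `σ_k > 0`, `w_k ≥ 0`, `Σ_k w_k = 1`, and at
least one `w_k > 0`.  With `ρ_t(x) = ∫ ρ₀(x − tv) ρ₁(x + (1−t)v) dv` the density of
the interpolant, for every `t ∈ [0,1]`, `x` and `v`, the velocity distribution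
`π₁(v; x, t) = ρ₀(x − tv) ρ₁(x + (1−t)v) / ρ_t(x)` equals
`Σ_k w̃_{k,t}(x) N(v; ((1−t)(μ_k − x) + t σ_k² x)/σ̃_{k,t}², σ_k²/σ̃_{k,t}²)`, where
`σ̃_{k,t}² = (1−t)² + t² σ_k²` and
`w̃_{k,t}(x) = w_k N(x; t μ_k, σ̃_{k,t}²) / Σ_{k'} w_{k'} N(x; t μ_{k'}, σ̃_{k',t}²)`. -/
theorem velocity_distribution_gaussian_mixture
    (K : ℕ) (w μ σ : Fin K → ℝ)
    (hσ : ∀ k, 0 < σ k) (hw : ∀ k, 0 ≤ w k) (hw1 : ∑ k, w k = 1)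
    (hwpos : ∃ k, 0 < w k)
    (ρ₀ ρ₁ : ℝ → ℝ)
    (hρ₀ : ∀ x, ρ₀ x = gauss x 0 1)
    (hρ₁ : ∀ x, ρ₁ x = ∑ k, w k * gauss x (μ k) (σ k ^ 2))
    (ρt : ℝ → ℝ → ℝ)
    (hρt : ∀ t x, ρt t x = ∫ v : ℝ, ρ₀ (x - t * v) * ρ₁ (x + (1 - t) * v) ∂volume)
    (t : ℝ) (ht : t ∈ Set.Icc (0 : ℝ) 1) (x v : ℝ) :
    ρ₀ (x - t * v) * ρ₁ (x + (1 - t) * v) / ρt t x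
      = ∑ k,
          (w k * gauss x (t * μ k) ((1 - t) ^ 2 + t ^ 2 * σ k ^ 2)
              / ∑ k', w k' * gauss x (t * μ k') ((1 - t) ^ 2 + t ^ 2 * σ k' ^ 2))
            * gauss v
                (((1 - t) * (μ k - x) + t * σ k ^ 2 * x) / ((1 - t) ^ 2 + t ^ 2 * σ k ^ 2))
                (σ k ^ 2 / ((1 - t) ^ 2 + t ^ 2 * σ k ^ 2)) :=
  velocity_distribution_gaussian_mixture_general K w μ σ hσ ρ₀ ρ₁ hρ₀ hρ₁ ρt hρt t x v
end

section
/- Marginal preservation (core of Theorem 2): let t ∈ [0,1] and Δt ∈ [0, 1−t], and let (Z, W) be a pair of real-valued random variables whose joint density with respect to Lebesgue measure on ℝ² is (x, v) ↦ ρ₀(x − tv) ρ₁(x + (1−t)v) (i.e., Z ~ ρ_t and, conditionally on Z = x, W has density π₁(·; x, t)). Then Z + Δt · W has the same law as X_{t+Δt} = (1−t−Δt)X₀ + (t+Δt)X₁; in particular its density is ρ_{t+Δt}. -/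
open MeasureTheory ProbabilityTheory ENNReal

/-!
The linear map `T (x, v) = (x - t v, x + (1 - t) v)` has determinant `1`, so it pushes the law
of `(Z, W)`, whose density is `(ρ₀ ⊗ ρ₁) ∘ T`, to the density `ρ₀ ⊗ ρ₁`; by independence this
is the law of `(X₀, X₁)`. Since `x + Δt v = (1 - t - Δt) (x - t v) + (t + Δt) (x + (1 - t) v)`,
the variable `Z + Δt W` is the image of `T (Z, W)` under the same linear form that produces
`X_{t+Δt}` from `(X₀, X₁)`.
-/

theorem MeasureTheory.MeasurePreserving.map_withDensity_comp {α β : Type*}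
    [MeasurableSpace α] [MeasurableSpace β] {μ : Measure α} {ν : Measure β} {T : α → β}
    (hT : MeasurePreserving T μ ν) {g : β → ℝ≥0∞} (hg : Measurable g) :
    (μ.withDensity (g ∘ T)).map T = ν.withDensity g := by
  ext s hs
  rw [Measure.map_apply hT.measurable hs, withDensity_apply _ (hT.measurable hs),
    withDensity_apply _ hs]
  exact hT.setLIntegral_comp_preimage hs hg

theorem measurePreserving_prod_linear_of_abs_det_eq_one {a b c d : ℝ} (h : |a * d - b * c| = 1) :
    MeasurePreserving (fun p : ℝ × ℝ => (a * p.1 + b * p.2, c * p.1 + d * p.2)) := by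
  let L := Matrix.toLin (Module.Basis.finTwoProd ℝ) (Module.Basis.finTwoProd ℝ) !![a, b; c, d]
  have hL : ⇑L = fun p : ℝ × ℝ => (a * p.1 + b * p.2, c * p.1 + d * p.2) :=
    funext (Matrix.toLin_finTwoProd_apply a b c d)
  have hdet : |LinearMap.det L| = 1 := by
    rwa [LinearMap.det_toLin, Matrix.det_fin_two_of]
  have hdet0 : LinearMap.det L ≠ 0 := abs_ne_zero.mp (by rw [hdet]; exact one_ne_zero)
  refine hL ▸ ⟨L.continuous_of_finiteDimensional.measurable, ?_⟩
  rw [Measure.map_linearMap_addHaar_eq_smul_addHaar _ hdet0, abs_inv, hdet]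
  simp

theorem ProbabilityTheory.IndepFun.map_prod_eq_withDensity {Ω α β : Type*}
    [MeasurableSpace Ω] [MeasurableSpace α] [MeasurableSpace β] {P : Measure Ω}
    [IsFiniteMeasure P] {X : Ω → α} {Y : Ω → β} {μ : Measure α} {ν : Measure β}
    [SFinite μ] [SFinite ν] {f : α → ℝ≥0∞} {g : β → ℝ≥0∞}
    (hXY : IndepFun X Y P) (hX : AEMeasurable X P) (hY : AEMeasurable Y P)
    (hf : AEMeasurable f μ) (hg : AEMeasurable g ν)
    (hXf : P.map X = μ.withDensity f) (hYg : P.map Y = ν.withDensity g) :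
    P.map (fun ω => (X ω, Y ω)) = (μ.prod ν).withDensity fun z => f z.1 * g z.2 := by
  rw [hXY.map_prod_eq_prod_map_map hX hY, hXf, hYg, prod_withDensity₀ hf hg]

theorem marginal_preservation_general
    {Ω : Type*} [MeasurableSpace Ω] (P : Measure Ω) [IsProbabilityMeasure P]
    (ρ₀ ρ₁ : ℝ → ℝ) (hρ₀m : Measurable ρ₀) (hρ₁m : Measurable ρ₁)
    (hρ₀nn : ∀ x, 0 ≤ ρ₀ x)
    (X₀ X₁ : Ω → ℝ) (hX₀m : Measurable X₀) (hX₁m : Measurable X₁)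
    (hindep : IndepFun X₀ X₁ P)
    (hX₀ : Measure.map X₀ P = volume.withDensity (fun x => ENNReal.ofReal (ρ₀ x)))
    (hX₁ : Measure.map X₁ P = volume.withDensity (fun x => ENNReal.ofReal (ρ₁ x)))
    (t Δt : ℝ)
    (Z W : Ω → ℝ) (hZm : Measurable Z) (hWm : Measurable W)
    (hZW : Measure.map (fun ω => (Z ω, W ω)) P
      = (volume : Measure (ℝ × ℝ)).withDensity
          (fun p => ENNReal.ofReal (ρ₀ (p.1 - t * p.2) * ρ₁ (p.1 + (1 - t) * p.2)))) :
    Measure.map (fun ω => Z ω + Δt * W ω) P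
      = Measure.map (fun ω => (1 - t - Δt) * X₀ ω + (t + Δt) * X₁ ω) P := by
  set T : ℝ × ℝ → ℝ × ℝ := fun p => (p.1 - t * p.2, p.1 + (1 - t) * p.2)
  set A : ℝ × ℝ → ℝ := fun q => (1 - t - Δt) * q.1 + (t + Δt) * q.2
  set g : ℝ × ℝ → ℝ≥0∞ := fun q => ENNReal.ofReal (ρ₀ q.1) * ENNReal.ofReal (ρ₁ q.2)
  have hT : MeasurePreserving T := by
    convert measurePreserving_prod_linear_of_abs_det_eq_one
      (a := 1) (b := -t) (c := 1) (d := 1 - t) (by norm_num) using 3 <;> ring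
  have hTZW : P.map (T ∘ fun ω => (Z ω, W ω)) = P.map fun ω => (X₀ ω, X₁ ω) := by
    have hdensity : (fun p : ℝ × ℝ =>
        ENNReal.ofReal (ρ₀ (p.1 - t * p.2) * ρ₁ (p.1 + (1 - t) * p.2))) = g ∘ T :=
      funext fun p => ENNReal.ofReal_mul (hρ₀nn _)
    rw [← Measure.map_map hT.measurable (by fun_prop), hZW, hdensity,
      hT.map_withDensity_comp (by fun_prop), hindep.map_prod_eq_withDensity hX₀m.aemeasurable
      hX₁m.aemeasurable (by fun_prop) (by fun_prop) hX₀ hX₁, Measure.volume_eq_prod]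
  calc P.map (fun ω => Z ω + Δt * W ω) = P.map (A ∘ T ∘ fun ω => (Z ω, W ω)) := by
        congr 1; funext ω; simp only [A, T, Function.comp_apply]; ring
    _ = P.map (A ∘ fun ω => (X₀ ω, X₁ ω)) := by
        rw [← Measure.map_map (by fun_prop) (by fun_prop), hTZW,
          Measure.map_map (by fun_prop) (by fun_prop)]

/-- marginal preservation: let `t ∈ [0,1]`, `Δt ∈ [0, 1−t]`, and let
`(Z, W)` be a pair of real random variables whose joint density w.r.t. Lebesgue
measure on ℝ² is `(x, v) ↦ ρ₀(x − tv) ρ₁(x + (1−t)v)` (i.e. `Z ~ ρ_t` and,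
conditionally on `Z = x`, `W ~ π₁(·; x, t)`).  Then `Z + Δt·W` has the same law
as `X_{t+Δt} = (1−t−Δt)X₀ + (t+Δt)X₁`; in particular its density is `ρ_{t+Δt}`. -/
theorem marginal_preservation
    {Ω : Type*} [MeasurableSpace Ω] (P : Measure Ω) [IsProbabilityMeasure P]
    (ρ₀ ρ₁ : ℝ → ℝ) (hρ₀m : Measurable ρ₀) (hρ₁m : Measurable ρ₁)
    (hρ₀nn : ∀ x, 0 ≤ ρ₀ x) (hρ₁nn : ∀ x, 0 ≤ ρ₁ x)
    (hρ₀1 : ∫⁻ x, ENNReal.ofReal (ρ₀ x) ∂(volume : Measure ℝ) = 1)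
    (hρ₁1 : ∫⁻ x, ENNReal.ofReal (ρ₁ x) ∂(volume : Measure ℝ) = 1)
    (X₀ X₁ : Ω → ℝ) (hX₀m : Measurable X₀) (hX₁m : Measurable X₁)
    (hindep : IndepFun X₀ X₁ P)
    (hX₀ : Measure.map X₀ P = volume.withDensity (fun x => ENNReal.ofReal (ρ₀ x)))
    (hX₁ : Measure.map X₁ P = volume.withDensity (fun x => ENNReal.ofReal (ρ₁ x)))
    (t Δt : ℝ) (ht : t ∈ Set.Icc (0 : ℝ) 1) (hΔt : Δt ∈ Set.Icc (0 : ℝ) (1 - t))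
    (Z W : Ω → ℝ) (hZm : Measurable Z) (hWm : Measurable W)
    (hZW : Measure.map (fun ω => (Z ω, W ω)) P
      = (volume : Measure (ℝ × ℝ)).withDensity
          (fun p => ENNReal.ofReal (ρ₀ (p.1 - t * p.2) * ρ₁ (p.1 + (1 - t) * p.2)))) :
    Measure.map (fun ω => Z ω + Δt * W ω) P
      = Measure.map (fun ω => (1 - t - Δt) * X₀ ω + (t + Δt) * X₁ ω) P :=
  marginal_preservation_general P ρ₀ ρ₁ hρ₀m hρ₁m hρ₀nn X₀ X₁ hX₀m hX₁m hindep hX₀ hX₁ t Δt Z W hZm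
    hWm hZW
end

section
/- Characteristic function identity: for every t ∈ [0,1], every Δt ∈ ℝ, and every k ∈ ℝ, ∫_ℝ ∫_ℝ exp(i k (x + v Δt)) ρ₀(x − tv) ρ₁(x + (1−t)v) dv dx = ∫_ℝ ∫_ℝ exp(i k ((1−t−Δt) x₀ + (t+Δt) x₁)) ρ₀(x₀) ρ₁(x₁) dx₀ dx₁. -/
/-!
The substitution `x₀ = x - t v`, `x₁ = x + (1 - t) v` is a linear map of the plane with
determinant `1`, hence preserves Lebesgue measure, and it carries the phase `x + v Δt` to
`(1 - t - Δt) x₀ + (t + Δt) x₁`. The integrand on the right is integrable on `ℝ × ℝ`, being a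
unimodular factor times `ρ₀ ⊗ ρ₁`, so Fubini turns both iterated integrals into one integral over
the plane, where the change of variables applies.
-/

open MeasureTheory Complex

section LinearChangeOfVariables

variable {E F : Type*} [NormedAddCommGroup E] [NormedSpace ℝ E] [MeasurableSpace E]
  [BorelSpace E] [FiniteDimensional ℝ E] {μ : Measure E} [μ.IsAddHaarMeasure]
  [NormedAddCommGroup F] {f : E →ₗ[ℝ] E}

theorem LinearMap.measurePreserving_of_abs_det_eq_one (hf : |LinearMap.det f| = 1) :
    MeasurePreserving f μ μ := by
  have hf₀ : LinearMap.det f ≠ 0 := abs_ne_zero.mp (hf ▸ one_ne_zero)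
  refine ⟨f.continuous_of_finiteDimensional.measurable, ?_⟩
  rw [Measure.map_linearMap_addHaar_eq_smul_addHaar μ hf₀, abs_inv, hf, inv_one,
    ENNReal.ofReal_one, one_smul]

theorem LinearMap.measurableEmbedding_of_det_ne_zero (hf : LinearMap.det f ≠ 0) :
    MeasurableEmbedding f :=
  (f.equivOfDetNeZero hf).toContinuousLinearEquiv.toHomeomorph.measurableEmbedding

theorem LinearMap.integrable_comp_iff_of_abs_det_eq_one (hf : |LinearMap.det f| = 1)
    {g : E → F} : Integrable (fun x ↦ g (f x)) μ ↔ Integrable g μ :=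
  (f.measurePreserving_of_abs_det_eq_one hf).integrable_comp_emb
    (f.measurableEmbedding_of_det_ne_zero (abs_ne_zero.mp (hf ▸ one_ne_zero)))

theorem LinearMap.integral_comp_of_abs_det_eq_one [NormedSpace ℝ F]
    (hf : |LinearMap.det f| = 1) (g : E → F) :
    ∫ x, g (f x) ∂μ = ∫ x, g x ∂μ :=
  (f.measurePreserving_of_abs_det_eq_one hf).integral_comp
    (f.measurableEmbedding_of_det_ne_zero (abs_ne_zero.mp (hf ▸ one_ne_zero))) g

end LinearChangeOfVariables

theorem MeasureTheory.Integrable.cexp_mul_of_re_eq_zero {α : Type*} [MeasurableSpace α]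
    {μ : Measure α} {g ψ : α → ℂ} (hg : Integrable g μ) (hψ : AEStronglyMeasurable ψ μ)
    (hψ_re : ∀ x, (ψ x).re = 0) : Integrable (fun x ↦ exp (ψ x) * g x) μ :=
  hg.bdd_mul (c := 1) (continuous_exp.comp_aestronglyMeasurable hψ)
    (Filter.Eventually.of_forall fun x ↦ by rw [norm_exp, hψ_re, Real.exp_zero])

/-- The endpoints `(x₀, x₁)` of the straight path that passes at time `t` through `x` with
velocity `v`. -/
def pathEndpoints (t : ℝ) : ℝ × ℝ →ₗ[ℝ] ℝ × ℝ :=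
  (LinearMap.fst ℝ ℝ ℝ - t • LinearMap.snd ℝ ℝ ℝ).prod
    (LinearMap.fst ℝ ℝ ℝ + (1 - t) • LinearMap.snd ℝ ℝ ℝ)

@[simp]
theorem pathEndpoints_apply (t : ℝ) (p : ℝ × ℝ) :
    pathEndpoints t p = (p.1 - t * p.2, p.1 + (1 - t) * p.2) := by
  simp [pathEndpoints]

theorem det_pathEndpoints (t : ℝ) : LinearMap.det (pathEndpoints t) = 1 := by
  rw [← LinearMap.det_toMatrix (Module.Basis.finTwoProd ℝ), Matrix.det_fin_two]
  simp [LinearMap.toMatrix_apply]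

theorem integral_integral_comp_pathEndpoints {F : Type*} [NormedAddCommGroup F]
    [NormedSpace ℝ F] (t : ℝ) {g : ℝ × ℝ → F} (hg : Integrable g) :
    ∫ x, ∫ v, g (x - t * v, x + (1 - t) * v) = ∫ x₀, ∫ x₁, g (x₀, x₁) := by
  have hdet : |LinearMap.det (pathEndpoints t)| = 1 := by rw [det_pathEndpoints, abs_one]
  have hg' : Integrable (fun p ↦ g (pathEndpoints t p)) :=
    (LinearMap.integrable_comp_iff_of_abs_det_eq_one hdet).mpr hg
  rw [Measure.volume_eq_prod] at hg hg'
  calc ∫ x, ∫ v, g (x - t * v, x + (1 - t) * v)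
      = ∫ p : ℝ × ℝ, g (pathEndpoints t p) := by
        rw [Measure.volume_eq_prod, integral_prod _ hg']
        simp only [pathEndpoints_apply]
    _ = ∫ p : ℝ × ℝ, g p := LinearMap.integral_comp_of_abs_det_eq_one hdet g
    _ = ∫ x₀, ∫ x₁, g (x₀, x₁) := by rw [Measure.volume_eq_prod, integral_prod _ hg]

theorem characteristic_function_identity_general
    (ρ₀ ρ₁ : ℝ → ℝ)
    (hρ₀i : Integrable ρ₀ (volume : Measure ℝ))
    (hρ₁i : Integrable ρ₁ (volume : Measure ℝ))
    (t : ℝ) (Δt k : ℝ) :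
    (∫ x : ℝ, ∫ v : ℝ,
        Complex.exp (Complex.I * (k : ℂ) * ((x : ℂ) + (v : ℂ) * (Δt : ℂ)))
          * ((ρ₀ (x - t * v) * ρ₁ (x + (1 - t) * v) : ℝ) : ℂ) ∂volume ∂volume)
      = ∫ x₀ : ℝ, ∫ x₁ : ℝ,
          Complex.exp (Complex.I * (k : ℂ)
              * (((1 - t - Δt : ℝ) : ℂ) * (x₀ : ℂ) + ((t + Δt : ℝ) : ℂ) * (x₁ : ℂ)))
            * ((ρ₀ x₀ * ρ₁ x₁ : ℝ) : ℂ) ∂volume ∂volume := by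
  let F : ℝ × ℝ → ℂ := fun p ↦
    exp (I * k * (((1 - t - Δt : ℝ) : ℂ) * p.1 + ((t + Δt : ℝ) : ℂ) * p.2))
      * ((ρ₀ p.1 * ρ₁ p.2 : ℝ) : ℂ)
  have hF : Integrable F := by
    refine Integrable.cexp_mul_of_re_eq_zero ?_ (by fun_prop) fun p ↦ by simp
    rw [Measure.volume_eq_prod]
    exact (hρ₀i.mul_prod hρ₁i).ofReal
  have phase : ∀ x v : ℝ, (x : ℂ) + v * Δt
      = ((1 - t - Δt : ℝ) : ℂ) * ↑(x - t * v) + ((t + Δt : ℝ) : ℂ) * ↑(x + (1 - t) * v) := by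
    intro x v
    push_cast
    ring
  simp_rw [phase]
  exact integral_integral_comp_pathEndpoints t hF

/-- characteristic function identity: for every `t ∈ [0,1]`,
`Δt ∈ ℝ` and `k ∈ ℝ`,
`∫ ∫ exp(i k (x + v Δt)) ρ₀(x − tv) ρ₁(x + (1−t)v) dv dx
  = ∫ ∫ exp(i k ((1−t−Δt)x₀ + (t+Δt)x₁)) ρ₀(x₀) ρ₁(x₁) dx₁ dx₀`. -/
theorem characteristic_function_identity
    (ρ₀ ρ₁ : ℝ → ℝ) (hρ₀m : Measurable ρ₀) (hρ₁m : Measurable ρ₁)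
    (hρ₀nn : ∀ x, 0 ≤ ρ₀ x) (hρ₁nn : ∀ x, 0 ≤ ρ₁ x)
    (hρ₀i : Integrable ρ₀ (volume : Measure ℝ))
    (hρ₁i : Integrable ρ₁ (volume : Measure ℝ))
    (hρ₀1 : ∫ x : ℝ, ρ₀ x ∂volume = 1) (hρ₁1 : ∫ x : ℝ, ρ₁ x ∂volume = 1)
    (t : ℝ) (ht : t ∈ Set.Icc (0 : ℝ) 1) (Δt k : ℝ) :
    (∫ x : ℝ, ∫ v : ℝ,
        Complex.exp (Complex.I * (k : ℂ) * ((x : ℂ) + (v : ℂ) * (Δt : ℂ)))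
          * ((ρ₀ (x - t * v) * ρ₁ (x + (1 - t) * v) : ℝ) : ℂ) ∂volume ∂volume)
      = ∫ x₀ : ℝ, ∫ x₁ : ℝ,
          Complex.exp (Complex.I * (k : ℂ)
              * (((1 - t - Δt : ℝ) : ℂ) * (x₀ : ℂ) + ((t + Δt : ℝ) : ℂ) * (x₁ : ℂ)))
            * ((ρ₀ x₀ * ρ₁ x₁ : ℝ) : ℂ) ∂volume ∂volume :=
  characteristic_function_identity_general ρ₀ ρ₁ hρ₀i hρ₁i t Δt k
end

section
/- One-step exact generation: let t ∈ [0,1) and let (Z, W) be a pair of real-valued random variables whose joint density with respect to Lebesgue measure on ℝ² is (x, v) ↦ ρ₀(x − tv) ρ₁(x + (1−t)v) (i.e., Z ~ ρ_t and, conditionally on Z = x, W has density π₁(·; x, t)). Then Z + (1−t) · W has density ρ₁, i.e., the straight-line step of length 1−t along a velocity sampled from the velocity distribution produces an exact sample from the data distribution. -/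
open MeasureTheory ProbabilityTheory ENNReal

/-- one-step exact generation: let `t ∈ [0,1)` and let `(Z, W)` be
a pair of real random variables whose joint density w.r.t. Lebesgue measure on ℝ²
is `(x, v) ↦ ρ₀(x − tv) ρ₁(x + (1−t)v)` (i.e. `Z ~ ρ_t` and, conditionally on
`Z = x`, `W ~ π₁(·; x, t)`).  Then `Z + (1−t)·W` has density `ρ₁`: the straight
step of length `1−t` along a sampled velocity produces an exact data sample. -/
theorem one_step_exact_generation
    {Ω : Type*} [MeasurableSpace Ω] (P : Measure Ω) [IsProbabilityMeasure P]
    (ρ₀ ρ₁ : ℝ → ℝ) (hρ₀m : Measurable ρ₀) (hρ₁m : Measurable ρ₁)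
    (hρ₀nn : ∀ x, 0 ≤ ρ₀ x) (hρ₁nn : ∀ x, 0 ≤ ρ₁ x)
    (hρ₀1 : ∫⁻ x, ENNReal.ofReal (ρ₀ x) ∂(volume : Measure ℝ) = 1)
    (hρ₁1 : ∫⁻ x, ENNReal.ofReal (ρ₁ x) ∂(volume : Measure ℝ) = 1)
    (t : ℝ) (ht : t ∈ Set.Ico (0 : ℝ) 1)
    (Z W : Ω → ℝ) (hZm : Measurable Z) (hWm : Measurable W)
    (hZW : Measure.map (fun ω => (Z ω, W ω)) P
      = (volume : Measure (ℝ × ℝ)).withDensity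
          (fun p => ENNReal.ofReal (ρ₀ (p.1 - t * p.2) * ρ₁ (p.1 + (1 - t) * p.2)))) :
    Measure.map (fun ω => Z ω + (1 - t) * W ω) P
      = volume.withDensity (fun x => ENNReal.ofReal (ρ₁ x)) := by
  have hg : Measurable (fun p : ℝ × ℝ => p.1 + (1 - t) * p.2) :=
    measurable_fst.add (measurable_const.mul measurable_snd)
  have hcomp : (fun ω => Z ω + (1 - t) * W ω)
      = (fun p : ℝ × ℝ => p.1 + (1 - t) * p.2) ∘ (fun ω => (Z ω, W ω)) := rfl
  set f : ℝ × ℝ → ℝ≥0∞ :=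
    fun p => ENNReal.ofReal (ρ₀ (p.1 - t * p.2) * ρ₁ (p.1 + (1 - t) * p.2)) with hf
  have hfm : Measurable f :=
    ENNReal.measurable_ofReal.comp
      ((hρ₀m.comp (measurable_fst.sub (measurable_const.mul measurable_snd))).mul
        (hρ₁m.comp (measurable_fst.add (measurable_const.mul measurable_snd))))
  rw [hcomp, ← Measure.map_map hg (hZm.prodMk hWm), hZW]
  ext s hs
  rw [Measure.map_apply hg hs, withDensity_apply _ (hg hs), withDensity_apply _ hs,
    ← lintegral_indicator (hg hs), ← lintegral_indicator hs]
  have hpt : ∀ p : ℝ × ℝ, ((fun p : ℝ × ℝ => p.1 + (1 - t) * p.2) ⁻¹' s).indicator f p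
      = s.indicator (fun y => ENNReal.ofReal (ρ₀ (y - p.2) * ρ₁ y)) (p.1 + (1 - t) * p.2) := by
    rintro ⟨x, v⟩
    by_cases h : x + (1 - t) * v ∈ s
    · simp only [Set.indicator_of_mem h,
        Set.indicator_of_mem (show (x, v) ∈ (fun p : ℝ × ℝ => p.1 + (1 - t) * p.2) ⁻¹' s from h),
        hf]
      congr 2
      ring_nf
    · simp [Set.indicator_of_notMem h, Set.indicator_of_notMem
        (show (x, v) ∉ (fun p : ℝ × ℝ => p.1 + (1 - t) * p.2) ⁻¹' s from h)]
  have hFm : Measurable fun p : ℝ × ℝ =>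
      s.indicator (fun y => ENNReal.ofReal (ρ₀ (y - p.2) * ρ₁ y)) (p.1 + (1 - t) * p.2) := by
    rw [← funext hpt]
    exact hfm.indicator (hg hs)
  calc ∫⁻ p, ((fun p : ℝ × ℝ => p.1 + (1 - t) * p.2) ⁻¹' s).indicator f p ∂volume
      = ∫⁻ p : ℝ × ℝ,
          s.indicator (fun y => ENNReal.ofReal (ρ₀ (y - p.2) * ρ₁ y)) (p.1 + (1 - t) * p.2)
            ∂volume := by
        exact lintegral_congr hpt
    _ = ∫⁻ v, ∫⁻ x,
          s.indicator (fun y => ENNReal.ofReal (ρ₀ (y - v) * ρ₁ y)) (x + (1 - t) * v)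
            ∂volume ∂volume := by
        rw [Measure.volume_eq_prod]
        exact lintegral_prod_symm' _ hFm
    _ = ∫⁻ v, ∫⁻ x,
          s.indicator (fun y => ENNReal.ofReal (ρ₀ (y - v) * ρ₁ y)) x ∂volume ∂volume := by
        refine lintegral_congr fun v => ?_
        exact lintegral_add_right_eq_self
          (fun x => s.indicator (fun y => ENNReal.ofReal (ρ₀ (y - v) * ρ₁ y)) x) ((1 - t) * v)
    _ = ∫⁻ x, ∫⁻ v,
          s.indicator (fun y => ENNReal.ofReal (ρ₀ (y - v) * ρ₁ y)) x ∂volume ∂volume := by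
        refine (lintegral_lintegral_swap ?_).symm
        refine Measurable.aemeasurable ?_
        have : Measurable fun p : ℝ × ℝ => ENNReal.ofReal (ρ₀ (p.2 - p.1) * ρ₁ p.2) :=
          ENNReal.measurable_ofReal.comp
            ((hρ₀m.comp (measurable_snd.sub measurable_fst)).mul (hρ₁m.comp measurable_snd))
        have h2 : (Function.uncurry fun x v =>
            s.indicator (fun y => ENNReal.ofReal (ρ₀ (y - v) * ρ₁ y)) x)
            = (Set.univ ×ˢ s).indicator
                (fun p : ℝ × ℝ => ENNReal.ofReal (ρ₀ (p.2 - p.1) * ρ₁ p.2)) ∘ Prod.swap := by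
          funext p
          rcases p with ⟨x, v⟩
          by_cases h : x ∈ s <;>
            simp [Function.uncurry, Set.indicator_apply, h]
        rw [h2]
        exact ((this.indicator (MeasurableSet.univ.prod hs)).comp measurable_swap)
    _ = ∫⁻ x, s.indicator (fun y => ENNReal.ofReal (ρ₁ y)) x ∂volume := by
        refine lintegral_congr fun x => ?_
        by_cases h : x ∈ s
        · simp only [Set.indicator_of_mem h]
          have factor : ∀ v : ℝ, ENNReal.ofReal (ρ₀ (x - v) * ρ₁ x)
              = ENNReal.ofReal (ρ₁ x) * ENNReal.ofReal (ρ₀ (x - v)) := fun v => by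
            rw [mul_comm (ρ₀ (x - v)), ENNReal.ofReal_mul (hρ₁nn x)]
          simp_rw [factor]
          have hm0 : Measurable fun v : ℝ => ENNReal.ofReal (ρ₀ (x - v)) :=
            ENNReal.measurable_ofReal.comp (hρ₀m.comp (measurable_const.sub measurable_id))
          rw [lintegral_const_mul _ hm0]
          have : ∫⁻ v, ENNReal.ofReal (ρ₀ (x - v)) ∂volume
              = ∫⁻ v, ENNReal.ofReal (ρ₀ v) ∂volume :=
            (Measure.measurePreserving_sub_left volume x).lintegral_comp
              (ENNReal.measurable_ofReal.comp hρ₀m)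
          rw [this, hρ₀1, mul_one]
        · simp [Set.indicator_of_notMem h]
    _ = ∫⁻ x, s.indicator (fun x => ENNReal.ofReal (ρ₁ x)) x ∂volume := rfl
end
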